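/- Let f : ℝ³ → ℝ be nonnegative, bounded by M, supported in {v : |v²| ≤ γ, |v³| ≤ γ} ∩ {|v¹| ≤ Q} with γ ≥ 1 and Q ≥ e (Euler's number). Then ρ − P₁ := ∫_{ℝ³} (v⁰ − (v¹)²/v⁰) f(v) dv = ∫_{ℝ³} (1 + (v²)² + (v³)²)/v⁰ · f(v) dv ≤ 8 M γ² (1+2γ²) (1 + ln Q), where v⁰ = √(1+|v|²). -/

import Mathlib

/-!
Writing `v⁰ = √(1 + ‖v‖²)`, the identity `v⁰ - (v 0)²/v⁰ = (1 + (v 1)² + (v 2)²)/v⁰` is pointwise.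
For the bound, `v⁰ ≥ max 1 |v 0|`, so on the support of `f` the integrand is at most
`M (1 + 2γ²) w(v 0)` with `w t = (max 1 |t|)⁻¹` on `[-Q, Q]`. This majorant is a product of
one-variable functions of the three coordinates, so Fubini gives
`M (1 + 2γ²) · 2γ · 2γ · ∫ w`, and `∫ w = 2 (1 + log Q)`: the integral of `1/|t|` between `1`
and `Q` is where the logarithm comes from.
-/

open MeasureTheory Set Real

lemma continuous_inv_max_one_abs : Continuous fun t : ℝ => (max 1 |t|)⁻¹ :=
  (continuous_const.max continuous_abs).inv₀ fun _ => (lt_max_of_lt_left one_pos).ne'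

lemma integral_inv_max_one_abs {Q : ℝ} (hQ : 1 ≤ Q) :
    ∫ t in (0)..Q, (max 1 |t|)⁻¹ = 1 + log Q := by
  have hcont := continuous_inv_max_one_abs
  rw [← intervalIntegral.integral_add_adjacent_intervals (b := 1)
    (hcont.intervalIntegrable _ _) (hcont.intervalIntegrable _ _)]
  have h01 : ∫ t in (0)..1, (max 1 |t|)⁻¹ = ∫ _ in (0:ℝ)..1, (1:ℝ) := by
    refine intervalIntegral.integral_congr fun t ht => ?_
    rw [uIcc_of_le zero_le_one] at ht
    simp [abs_of_nonneg ht.1, ht.2]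
  have h1Q : ∫ t in (1)..Q, (max 1 |t|)⁻¹ = ∫ t in (1)..Q, t⁻¹ := by
    refine intervalIntegral.integral_congr fun t ht => ?_
    rw [uIcc_of_le hQ] at ht
    simp [abs_of_nonneg (zero_le_one.trans ht.1), ht.1]
  rw [h01, h1Q, integral_inv_of_pos one_pos (one_pos.trans_le hQ)]
  simp

lemma integral_inv_max_one_abs_neg {Q : ℝ} (hQ : 1 ≤ Q) :
    ∫ t in (-Q)..Q, (max 1 |t|)⁻¹ = 2 * (1 + log Q) := by
  have hcont := continuous_inv_max_one_abs
  rw [← intervalIntegral.integral_add_adjacent_intervals (b := 0)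
    (hcont.intervalIntegrable _ _) (hcont.intervalIntegrable _ _)]
  have := intervalIntegral.integral_comp_neg (a := 0) (b := Q) fun t : ℝ => (max 1 |t|)⁻¹
  simp only [abs_neg, neg_zero] at this
  rw [← this, integral_inv_max_one_abs hQ]
  ring

noncomputable def logWeight (Q : ℝ) : ℝ → ℝ :=
  (Icc (-Q) Q).indicator fun t => (max 1 |t|)⁻¹

lemma integrable_logWeight (Q : ℝ) : Integrable (logWeight Q) :=
  (continuous_inv_max_one_abs.integrableOn_Icc).integrable_indicator measurableSet_Icc

lemma integral_logWeight {Q : ℝ} (hQ : 1 ≤ Q) : ∫ t, logWeight Q t = 2 * (1 + log Q) := by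
  rw [logWeight, integral_indicator measurableSet_Icc, integral_Icc_eq_integral_Ioc,
    ← intervalIntegral.integral_of_le (by linarith), integral_inv_max_one_abs_neg hQ]

lemma logWeight_nonneg (Q t : ℝ) : 0 ≤ logWeight Q t :=
  indicator_nonneg (fun _ _ => by positivity) t

lemma inv_le_logWeight {Q t s : ℝ} (ht : |t| ≤ Q) (hs : max 1 |t| ≤ s) :
    s⁻¹ ≤ logWeight Q t := by
  rw [logWeight, indicator_of_mem (mem_Icc.2 (abs_le.1 ht))]
  exact inv_anti₀ (lt_max_of_lt_left one_pos) hs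

namespace EuclideanSpace

variable {ι : Type*} [Fintype ι]

lemma integrable_fintype_prod {g : ι → ℝ → ℝ} (hg : ∀ i, Integrable (g i)) :
    Integrable fun v : EuclideanSpace ℝ ι => ∏ i, g i (v i) :=
  ((PiLp.volume_preserving_ofLp ι).integrable_comp_emb
    (MeasurableEquiv.toLp 2 _).symm.measurableEmbedding).2 (Integrable.fintype_prod hg)

lemma integral_fintype_prod_eq_prod (g : ι → ℝ → ℝ) :
    ∫ v : EuclideanSpace ℝ ι, ∏ i, g i (v i) = ∏ i, ∫ t, g i t := by
  rw [← integral_fintype_prod_volume_eq_prod g]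
  exact (PiLp.volume_preserving_ofLp ι).integral_comp
    (MeasurableEquiv.toLp 2 _).symm.measurableEmbedding fun x : ι → ℝ => ∏ i, g i (x i)

lemma integrable_mul_mul_fin_three {g₀ g₁ g₂ : ℝ → ℝ} (h₀ : Integrable g₀) (h₁ : Integrable g₁)
    (h₂ : Integrable g₂) :
    Integrable fun v : EuclideanSpace ℝ (Fin 3) => g₀ (v 0) * g₁ (v 1) * g₂ (v 2) := by
  simpa [Fin.prod_univ_three] using integrable_fintype_prod (g := ![g₀, g₁, g₂])
    (by simp [Fin.forall_fin_succ, h₀, h₁, h₂])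

lemma integral_mul_mul_fin_three (g₀ g₁ g₂ : ℝ → ℝ) :
    ∫ v : EuclideanSpace ℝ (Fin 3), g₀ (v 0) * g₁ (v 1) * g₂ (v 2) =
      (∫ t, g₀ t) * (∫ t, g₁ t) * ∫ t, g₂ t := by
  simpa [Fin.prod_univ_three] using integral_fintype_prod_eq_prod ![g₀, g₁, g₂]

end EuclideanSpace

lemma sqrt_sub_sq_div_sqrt {r : ℝ} (hr : 0 ≤ r) (a : ℝ) : √r - a ^ 2 / √r = (r - a ^ 2) / √r := by
  rcases hr.eq_or_lt with rfl | hr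
  · simp
  · field_simp
    rw [sq_sqrt hr.le]

lemma EuclideanSpace.norm_sq_fin_three (v : EuclideanSpace ℝ (Fin 3)) :
    ‖v‖ ^ 2 = v 0 ^ 2 + v 1 ^ 2 + v 2 ^ 2 := by
  rw [EuclideanSpace.real_norm_sq_eq, Fin.sum_univ_three]

lemma max_one_abs_le_sqrt_one_add_norm_sq {ι : Type*} [Fintype ι] (v : EuclideanSpace ℝ ι)
    (i : ι) : max 1 |v i| ≤ √(1 + ‖v‖ ^ 2) := by
  refine max_le (one_le_sqrt.2 (by nlinarith [sq_nonneg ‖v‖])) ?_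
  rw [← sqrt_sq_eq_abs]
  refine sqrt_le_sqrt ?_
  have := PiLp.norm_apply_le v i
  rw [Real.norm_eq_abs] at this
  nlinarith [abs_nonneg (v i), sq_abs (v i)]

lemma one_add_sq_add_sq_div_sqrt_le_logWeight {v : EuclideanSpace ℝ (Fin 3)} {γ Q : ℝ}
    (h1 : |v 1| ≤ γ) (h2 : |v 2| ≤ γ) (h0 : |v 0| ≤ Q) :
    (1 + v 1 ^ 2 + v 2 ^ 2) / √(1 + ‖v‖ ^ 2) ≤ (1 + 2 * γ ^ 2) * logWeight Q (v 0) := by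
  have hnum : 1 + v 1 ^ 2 + v 2 ^ 2 ≤ 1 + 2 * γ ^ 2 := by
    nlinarith [sq_le_sq' (abs_le.1 h1).1 (abs_le.1 h1).2, sq_le_sq' (abs_le.1 h2).1 (abs_le.1 h2).2]
  rw [div_eq_mul_inv]
  exact mul_le_mul hnum (inv_le_logWeight h0 (max_one_abs_le_sqrt_one_add_norm_sq v 0))
    (by positivity) (by positivity)

lemma div_sqrt_mul_le_logWeight_mul_indicator {f : EuclideanSpace ℝ (Fin 3) → ℝ} {M γ Q : ℝ}
    (hf0 : ∀ v, 0 ≤ f v) (hfM : ∀ v, f v ≤ M)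
    (hsupp : ∀ v, f v ≠ 0 → |v 1| ≤ γ ∧ |v 2| ≤ γ ∧ |v 0| ≤ Q) (v : EuclideanSpace ℝ (Fin 3)) :
    (1 + v 1 ^ 2 + v 2 ^ 2) / √(1 + ‖v‖ ^ 2) * f v ≤
      M * (1 + 2 * γ ^ 2) *
        (logWeight Q (v 0) * (Icc (-γ) γ).indicator 1 (v 1) * (Icc (-γ) γ).indicator 1 (v 2)) := by
  rcases eq_or_ne (f v) 0 with hv | hv
  · have hM : 0 ≤ M := (hf0 0).trans (hfM 0)
    have hχ (t : ℝ) : 0 ≤ (Icc (-γ) γ).indicator (1 : ℝ → ℝ) t := indicator_nonneg (by simp) t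
    rw [hv, mul_zero]
    exact mul_nonneg (by positivity)
      (mul_nonneg (mul_nonneg (logWeight_nonneg Q _) (hχ _)) (hχ _))
  obtain ⟨h1, h2, h0⟩ := hsupp v hv
  simp only [indicator_of_mem (mem_Icc.2 (abs_le.1 h1)),
    indicator_of_mem (mem_Icc.2 (abs_le.1 h2)), Pi.one_apply, mul_one]
  calc _ ≤ (1 + 2 * γ ^ 2) * logWeight Q (v 0) * M :=
        mul_le_mul (one_add_sq_add_sq_div_sqrt_le_logWeight h1 h2 h0) (hfM v) (hf0 v)
          (mul_nonneg (by positivity) (logWeight_nonneg Q _))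
    _ = _ := by ring

theorem stmt_19_general (f : EuclideanSpace ℝ (Fin 3) → ℝ) (M γ Q : ℝ)
    (hγ : 1 ≤ γ) (hQ : Real.exp 1 ≤ Q)
    (hf0 : ∀ v, 0 ≤ f v) (hfM : ∀ v, f v ≤ M)
    (hsupp : ∀ v : EuclideanSpace ℝ (Fin 3), f v ≠ 0 →
      |v 1| ≤ γ ∧ |v 2| ≤ γ ∧ |v 0| ≤ Q) :
    (∫ v : EuclideanSpace ℝ (Fin 3),
        (Real.sqrt (1 + ‖v‖ ^ 2) - (v 0) ^ 2 / Real.sqrt (1 + ‖v‖ ^ 2)) * f v) =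
      (∫ v : EuclideanSpace ℝ (Fin 3),
        (1 + (v 1) ^ 2 + (v 2) ^ 2) / Real.sqrt (1 + ‖v‖ ^ 2) * f v) ∧
    (∫ v : EuclideanSpace ℝ (Fin 3),
        (1 + (v 1) ^ 2 + (v 2) ^ 2) / Real.sqrt (1 + ‖v‖ ^ 2) * f v) ≤
      8 * M * γ ^ 2 * (1 + 2 * γ ^ 2) * (1 + Real.log Q) := by
  refine ⟨integral_congr_ae (.of_forall fun v => ?_), ?_⟩
  · simp only
    rw [sqrt_sub_sq_div_sqrt (by positivity), EuclideanSpace.norm_sq_fin_three]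
    ring_nf
  have hQ1 : 1 ≤ Q := (one_le_exp zero_le_one).trans hQ
  have hχ : Integrable ((Icc (-γ) γ).indicator (1 : ℝ → ℝ)) :=
    (integrable_indicator_iff measurableSet_Icc).2 (integrableOn_const measure_Icc_lt_top.ne)
  calc _ ≤ ∫ v : EuclideanSpace ℝ (Fin 3), M * (1 + 2 * γ ^ 2) * (logWeight Q (v 0) *
          (Icc (-γ) γ).indicator 1 (v 1) * (Icc (-γ) γ).indicator 1 (v 2)) :=
        integral_mono_of_nonneg (.of_forall fun v => by have := hf0 v; positivity)
          ((EuclideanSpace.integrable_mul_mul_fin_three (integrable_logWeight Q) hχ hχ).const_mul _)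
          (.of_forall (div_sqrt_mul_le_logWeight_mul_indicator hf0 hfM hsupp))
    _ = M * (1 + 2 * γ ^ 2) * (2 * (1 + log Q) * (γ - -γ) * (γ - -γ)) := by
        rw [integral_const_mul, EuclideanSpace.integral_mul_mul_fin_three, integral_logWeight hQ1,
          integral_indicator_one measurableSet_Icc, volume_real_Icc_of_le (by linarith)]
    _ = 8 * M * γ ^ 2 * (1 + 2 * γ ^ 2) * (1 + Real.log Q) := by ring

/-- Cancellation estimate for `ρ − P₁`: for a nonnegative `f ≤ M` supported in
`{|v²| ≤ γ, |v³| ≤ γ, |v¹| ≤ Q}` with `γ ≥ 1` and `Q ≥ e`, one has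
`ρ − P₁ = ∫ (v⁰ − (v¹)²/v⁰) f dv = ∫ (1+(v²)²+(v³)²)/v⁰ · f dv
  ≤ 8 M γ² (1+2γ²)(1 + ln Q)`, where `v⁰ = √(1+|v|²)`. -/
theorem stmt_19 (f : EuclideanSpace ℝ (Fin 3) → ℝ) (M γ Q : ℝ)
    (hmeas : Measurable f) (hγ : 1 ≤ γ) (hQ : Real.exp 1 ≤ Q)
    (hf0 : ∀ v, 0 ≤ f v) (hfM : ∀ v, f v ≤ M)
    (hsupp : ∀ v : EuclideanSpace ℝ (Fin 3), f v ≠ 0 →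
      |v 1| ≤ γ ∧ |v 2| ≤ γ ∧ |v 0| ≤ Q) :
    (∫ v : EuclideanSpace ℝ (Fin 3),
        (Real.sqrt (1 + ‖v‖ ^ 2) - (v 0) ^ 2 / Real.sqrt (1 + ‖v‖ ^ 2)) * f v) =
      (∫ v : EuclideanSpace ℝ (Fin 3),
        (1 + (v 1) ^ 2 + (v 2) ^ 2) / Real.sqrt (1 + ‖v‖ ^ 2) * f v) ∧
    (∫ v : EuclideanSpace ℝ (Fin 3),
        (1 + (v 1) ^ 2 + (v 2) ^ 2) / Real.sqrt (1 + ‖v‖ ^ 2) * f v) ≤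
      8 * M * γ ^ 2 * (1 + 2 * γ ^ 2) * (1 + Real.log Q) :=
  stmt_19_general f M γ Q hγ hQ hf0 hfM hsupp
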